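/- arXiv:2601.15126 — 4 statements merged into one kernel-verified Lean document; each statement's English description precedes it below -/
import Mathlib

section
/- Let G be a finite set of natural numbers containing 0 with maximum M, and let ℓ be a natural number. Define the symmetric array S = G ∪ (M - G + ℓ). If the difference co-array of G contains all integers from 0 to M (i.e., [0, M] ⊆ G - G) and the sum co-array of G contains all integers from 0 to ℓ-1 (i.e., [0, ℓ-1] ⊆ G + G), then the sum co-array of S is contiguous: S + S = [0, 2(M + ℓ)]. -/
open Pointwise

/-- Sufficient condition for a contiguous sum co-array of the symmetric array
`S = G ∪ (max G - G + ℓ)`: if `[0, max G] ⊆ G - G` and `[0, ℓ-1] ⊆ G + G`,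
then `S + S = [0, 2(max G + ℓ)]`. -/
theorem symmetric_array_contiguous_sum_coarray (G : Finset ℤ) (hG0 : (0 : ℤ) ∈ G)
    (hGnn : ∀ g ∈ G, 0 ≤ g) (hGne : G.Nonempty) (M : ℤ) (hM : M = G.max' hGne)
    (ℓ : ℤ) (hℓ : 0 ≤ ℓ)
    (S : Finset ℤ) (hS : S = G ∪ G.image (fun g => M - g + ℓ))
    (hdiff : Finset.Icc (0 : ℤ) M ⊆ G - G)
    (hsum : Finset.Icc (0 : ℤ) (ℓ - 1) ⊆ G + G) :
    S + S = Finset.Icc (0 : ℤ) (2 * (M + ℓ)) := by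
  have hMmax : ∀ g ∈ G, g ≤ M := fun g hg => hM ▸ G.le_max' g hg
  have hM0 : 0 ≤ M := hMmax 0 hG0
  have hSsub : ∀ s ∈ S, 0 ≤ s ∧ s ≤ M + ℓ := by
    intro s hs
    rw [hS, Finset.mem_union] at hs
    rcases hs with h | h
    · exact ⟨hGnn s h, by linarith [hMmax s h]⟩
    · rw [Finset.mem_image] at h
      obtain ⟨g, hg, rfl⟩ := h
      exact ⟨by linarith [hMmax g hg], by linarith [hGnn g hg]⟩
  ext x
  simp only [Finset.mem_Icc]
  constructor
  · intro hx
    rw [Finset.mem_add] at hx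
    obtain ⟨a, ha, b, hb, rfl⟩ := hx
    obtain ⟨ha0, ha1⟩ := hSsub a ha
    obtain ⟨hb0, hb1⟩ := hSsub b hb
    constructor <;> linarith
  · rintro ⟨hx0, hx1⟩
    rw [Finset.mem_add]
    by_cases h1 : x ≤ ℓ - 1
    · have hx : x ∈ G + G := hsum (Finset.mem_Icc.mpr ⟨hx0, h1⟩)
      rw [Finset.mem_add] at hx
      obtain ⟨a, ha, b, hb, hab⟩ := hx
      exact ⟨a, by rw [hS]; exact Finset.mem_union_left _ ha,
        b, by rw [hS]; exact Finset.mem_union_left _ hb, hab⟩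
    · by_cases h2 : x ≤ 2 * M + ℓ
      · have hd : x - ℓ - M ∈ G - G := by
          by_cases h3 : 0 ≤ x - ℓ - M
          · exact hdiff (Finset.mem_Icc.mpr ⟨h3, by linarith⟩)
          · have hm : M + ℓ - x ∈ G - G :=
              hdiff (Finset.mem_Icc.mpr ⟨by linarith, by linarith⟩)
            rw [Finset.mem_sub] at hm ⊢
            obtain ⟨a, ha, b, hb, hab⟩ := hm
            exact ⟨b, hb, a, ha, by linarith⟩
        rw [Finset.mem_sub] at hd
        obtain ⟨a, ha, b, hb, hab⟩ := hd
        refine ⟨a, by rw [hS]; exact Finset.mem_union_left _ ha,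
          M - b + ℓ, ?_, by linarith⟩
        rw [hS]
        exact Finset.mem_union_right _ (Finset.mem_image.mpr ⟨b, hb, rfl⟩)
      · have hx : 2 * (M + ℓ) - x ∈ G + G :=
          hsum (Finset.mem_Icc.mpr ⟨by linarith, by linarith⟩)
        rw [Finset.mem_add] at hx
        obtain ⟨a, ha, b, hb, hab⟩ := hx
        refine ⟨M - a + ℓ, ?_, M - b + ℓ, ?_, by linarith⟩
        · rw [hS]
          exact Finset.mem_union_right _ (Finset.mem_image.mpr ⟨a, ha, rfl⟩)
        · rw [hS]
          exact Finset.mem_union_right _ (Finset.mem_image.mpr ⟨b, hb, rfl⟩)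
end

section
/- The only finite sets D of natural numbers containing 0 whose sum co-array is contiguous (D + D = [0, 2·max D]) and non-redundant (|D + D| = |D|(|D|+1)/2) are D = {0} and D = {0, 1}. -/
open Pointwise

/-- The only finite sets `D ⊆ ℕ` with `0 ∈ D` whose sum co-array is contiguous
(`D + D = [0, 2·max D]`) and non-redundant (`|D + D| = |D|(|D|+1)/2`) are
`{0}` and `{0, 1}`. -/
theorem nonredundant_contiguous_only_trivial (D : Finset ℕ) (h0 : 0 ∈ D)
    (hne : D.Nonempty)
    (hcont : D + D = Finset.range (2 * D.max' hne + 1))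
    (hnr : (D + D).card = D.card * (D.card + 1) / 2) :
    D = {0} ∨ D = {0, 1} := by
  set m := D.max' hne with hm
  have hmem : m ∈ D := D.max'_mem hne
  have hle : ∀ a ∈ D, a ≤ m := fun a ha => D.le_max' a ha
  -- the sum function on Sym2
  set f : Sym2 ℕ → ℕ := Sym2.lift ⟨(· + ·), Nat.add_comm⟩ with hf
  have himg : D.sym2.image f = D + D := by
    ext x
    simp only [Finset.mem_image, Finset.mem_add]
    constructor
    · rintro ⟨p, hp, rfl⟩
      induction p using Sym2.ind with
      | _ a b =>
        rw [Finset.mk_mem_sym2_iff] at hp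
        exact ⟨a, hp.1, b, hp.2, rfl⟩
    · rintro ⟨a, ha, b, hb, rfl⟩
      exact ⟨s(a, b), Finset.mk_mem_sym2_iff.2 ⟨ha, hb⟩, rfl⟩
  have hinj : Set.InjOn f D.sym2 := by
    rw [← Finset.card_image_iff, himg, hnr, Finset.card_sym2,
      Nat.choose_two_right, Nat.add_sub_cancel, Nat.mul_comm]
  -- case on m
  match hm2 : m with
  | 0 =>
    left
    ext x
    simp only [Finset.mem_singleton]
    constructor
    · intro hx; have := hle x hx; omega
    · rintro rfl; exact h0
  | 1 =>
    right
    ext x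
    simp only [Finset.mem_insert, Finset.mem_singleton]
    constructor
    · intro hx; have := hle x hx; omega
    · rintro (rfl | rfl)
      · exact h0
      · exact hmem
  | (k+2) =>
    exfalso
    -- 1 ∈ D
    have h1 : 1 ∈ D := by
      have : (1 : ℕ) ∈ D + D := by
        rw [hcont, Finset.mem_range]; omega
      rw [Finset.mem_add] at this
      obtain ⟨a, ha, b, hb, hab⟩ := this
      have : a = 1 ∨ b = 1 := by omega
      rcases this with rfl | rfl
      · exact ha
      · exact hb
    -- k+1 ∈ D
    have hk1 : k + 1 ∈ D := by
      have : 2 * (k + 2) - 1 ∈ D + D := by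
        rw [hcont, Finset.mem_range]; omega
      rw [Finset.mem_add] at this
      obtain ⟨a, ha, b, hb, hab⟩ := this
      have ha' := hle a ha
      have hb' := hle b hb
      have : a = k + 1 ∨ b = k + 1 := by omega
      rcases this with rfl | rfl
      · exact ha
      · exact hb
    -- collision: s(0, k+2) vs s(1, k+1)
    have hc : f s(0, k+2) = f s(1, k+1) := by
      simp only [hf, Sym2.lift_mk]
      omega
    have := hinj (Finset.mk_mem_sym2_iff.2 ⟨h0, hmem⟩)
      (Finset.mk_mem_sym2_iff.2 ⟨h1, hk1⟩) hc
    rw [Sym2.eq_iff] at this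
    omega
end

section
/- The concatenated nested array D_CNA(N1, N2) = D1 ∪ (D2 + N1) ∪ (D1 + (N1+1)·N2), where D1 = {0, ..., N1 - 1} and D2 = {0, N1+1, 2(N1+1), ..., (N2-1)(N1+1)}, has a contiguous sum co-array: D_CNA + D_CNA = [0, 2·max D_CNA], where max D_CNA = (N1+1)·N2 + N1 - 1. -/
open Pointwise

/-- The concatenated nested array has a contiguous sum co-array
`[0, 2·max D_CNA]` with `max D_CNA = (N1+1)·N2 + N1 - 1`. -/
theorem cna_contiguous_sum_coarray (N1 N2 : ℕ) (h1 : 1 ≤ N1) (h2 : 1 ≤ N2)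
    (D1 D2 DCNA : Finset ℕ)
    (hD1 : D1 = Finset.range N1)
    (hD2 : D2 = (Finset.range N2).image (fun k => k * (N1 + 1)))
    (hCNA : DCNA = D1 ∪ D2.image (fun d => d + N1)
        ∪ D1.image (fun d => d + (N1 + 1) * N2)) :
    DCNA + DCNA = Finset.range (2 * ((N1 + 1) * N2 + N1 - 1) + 1) := by
  have memA : ∀ x, x < N1 → x ∈ DCNA := by
    intro x hx
    simp [hCNA, hD1, Finset.mem_union, Finset.mem_range, hx]
  have memB : ∀ k, k < N2 → k * (N1 + 1) + N1 ∈ DCNA := by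
    intro k hk
    simp only [hCNA, hD2, Finset.mem_union, Finset.mem_image, Finset.mem_range]
    exact Or.inl (Or.inr ⟨k * (N1+1), ⟨k, hk, rfl⟩, rfl⟩)
  have memC : ∀ x, x < N1 → x + (N1 + 1) * N2 ∈ DCNA := by
    intro x hx
    simp only [hCNA, hD1, Finset.mem_union, Finset.mem_image, Finset.mem_range]
    exact Or.inr ⟨x, hx, rfl⟩
  have bound : ∀ x ∈ DCNA, x ≤ (N1 + 1) * N2 + N1 - 1 := by
    intro x hx
    simp only [hCNA, hD1, hD2, Finset.mem_union, Finset.mem_image, Finset.mem_range] at hx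
    rcases hx with (hx | ⟨d, ⟨k, hk, rfl⟩, rfl⟩) | ⟨d, hd, rfl⟩
    · omega
    · have : (k + 1) * (N1 + 1) ≤ N2 * (N1 + 1) := Nat.mul_le_mul_right _ hk
      have e1 : (k + 1) * (N1 + 1) = k * (N1 + 1) + (N1 + 1) := by ring
      have e2 : N2 * (N1 + 1) = (N1 + 1) * N2 := by ring
      omega
    · omega
  ext n
  simp only [Finset.mem_add, Finset.mem_range]
  constructor
  · rintro ⟨a, ha, b, hb, rfl⟩
    have := bound a ha
    have := bound b hb
    omega
  · intro hn
    have hn' : n ≤ 2 * ((N1 + 1) * N2 + N1 - 1) := by omega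
    by_cases c1 : n < N1
    · exact ⟨0, memA 0 h1, n, memA n c1, by omega⟩
    by_cases c2 : n ≤ (N1 + 1) * N2 + N1 - 1
    · -- case 2 : N1 ≤ n ≤ M
      set q := (n - N1) / (N1 + 1) with hq
      set r := (n - N1) % (N1 + 1) with hr
      have hdm : (N1 + 1) * q + r = n - N1 := Nat.div_add_mod (n - N1) (N1 + 1)
      have hcm : (N1 + 1) * q = q * (N1 + 1) := by ring
      have hrlt : r < N1 + 1 := Nat.mod_lt _ (by omega)
      have hqlt : q < N2 := by
        have : q * (N1 + 1) < N2 * (N1 + 1) := by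
          have e2 : N2 * (N1 + 1) = (N1 + 1) * N2 := by ring
          omega
        exact Nat.lt_of_mul_lt_mul_right this
      by_cases hrN : r < N1
      · exact ⟨q * (N1 + 1) + N1, memB q hqlt, r, memA r hrN, by omega⟩
      · exact ⟨q * (N1 + 1) + N1, memB q hqlt, 0 * (N1 + 1) + N1, memB 0 h2, by
          simp only [Nat.zero_mul]; omega⟩
    by_cases c3 : n < 2 * ((N1 + 1) * N2)
    · -- case 3 : M < n < 2P
      set m := n - (N1 + 1) * N2 with hm
      have hm1 : N1 ≤ m := by omega
      have hm2 : m ≤ (N1 + 1) * N2 - 1 := by omega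
      set q := (m - N1) / (N1 + 1) with hq
      set r := (m - N1) % (N1 + 1) with hr
      have hdm : (N1 + 1) * q + r = m - N1 := Nat.div_add_mod (m - N1) (N1 + 1)
      have hcm : (N1 + 1) * q = q * (N1 + 1) := by ring
      have hrlt : r < N1 + 1 := Nat.mod_lt _ (by omega)
      have hqlt : q < N2 := by
        have mcm : N2 * (N1 + 1) = (N1 + 1) * N2 := by ring
        have : q * (N1 + 1) < N2 * (N1 + 1) := by omega
        exact Nat.lt_of_mul_lt_mul_right this
      by_cases hrN : r < N1
      · exact ⟨q * (N1 + 1) + N1, memB q hqlt, r + (N1 + 1) * N2, memC r hrN, by omega⟩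
      · -- r = N1, use B_{N2-1} + B_{q+1}
        have hq2 : q + 1 < N2 := by
          have mcm : N2 * (N1 + 1) = (N1 + 1) * N2 := by ring
          have e1 : (q + 1) * (N1 + 1) = q * (N1 + 1) + (N1 + 1) := by ring
          have : (q + 1) * (N1 + 1) < N2 * (N1 + 1) := by omega
          exact Nat.lt_of_mul_lt_mul_right this
        refine ⟨(N2 - 1) * (N1 + 1) + N1, memB _ (by omega), (q + 1) * (N1 + 1) + N1,
          memB _ hq2, ?_⟩
        have e1 : (q + 1) * (N1 + 1) = q * (N1 + 1) + (N1 + 1) := by ring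
        have e2 : (N2 - 1) * (N1 + 1) + (N1 + 1) = N2 * (N1 + 1) := by
          have : N2 - 1 + 1 = N2 := by omega
          calc (N2 - 1) * (N1 + 1) + (N1 + 1) = (N2 - 1 + 1) * (N1 + 1) := by ring
            _ = N2 * (N1 + 1) := by rw [this]
        have mcm : N2 * (N1 + 1) = (N1 + 1) * N2 := by ring
        omega
    · -- case 4 : C + C
      set u := n - 2 * ((N1 + 1) * N2) with hu
      have hu2 : u ≤ 2 * N1 - 2 := by omega
      refine ⟨min u (N1 - 1) + (N1 + 1) * N2, memC _ (by omega), (u - min u (N1 - 1)) + (N1 + 1) * N2,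
        memC _ (by omega), by omega⟩
end

section
/- The nested array D_NA(N1, N2) = D1 ∪ (D2 + N1), with D1 = {0,...,N1-1} and D2 = {k(N1+1) | 0 ≤ k ≤ N2-1}, has a contiguous difference co-array: D_NA - D_NA ⊇ {-(M), ..., M} where M = max D_NA = N1 + (N2-1)(N1+1). -/
open Pointwise

/-- The nested array `D_NA = D1 ∪ (D2 + N1)` has a contiguous difference
co-array containing `[-M, M]` where `M = N1 + (N2-1)(N1+1)`. -/
theorem nested_array_contiguous_diff_coarray (N1 N2 : ℕ) (h1 : 1 ≤ N1) (h2 : 1 ≤ N2)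
    (DNA : Finset ℕ)
    (hNA : DNA = Finset.range N1
        ∪ ((Finset.range N2).image (fun k => k * (N1 + 1))).image (fun d => d + N1))
    (M : ℤ) (hM : M = (N1 : ℤ) + ((N2 : ℤ) - 1) * ((N1 : ℤ) + 1)) :
    Finset.Icc (-M) M ⊆ DNA.image ((↑) : ℕ → ℤ) - DNA.image ((↑) : ℕ → ℤ) := by
  obtain ⟨m, rfl⟩ : ∃ m, N2 = m + 1 := ⟨N2 - 1, by omega⟩
  have hbig : ∀ k, k < m + 1 → k * (N1 + 1) + N1 ∈ DNA := by
    intro k hk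
    rw [hNA]
    refine Finset.mem_union_right _ ?_
    refine Finset.mem_image.2 ⟨k * (N1 + 1), ?_, rfl⟩
    exact Finset.mem_image.2 ⟨k, Finset.mem_range.2 hk, rfl⟩
  have hsmall : ∀ r, r < N1 → r ∈ DNA := by
    intro r hr
    rw [hNA]
    exact Finset.mem_union_left _ (Finset.mem_range.2 hr)
  have key : ∀ n : ℕ, n ≤ N1 + m * (N1 + 1) → ∃ a ∈ DNA, ∃ b ∈ DNA, a = b + n := by
    intro n hn
    have hdm := Nat.div_add_mod n (N1 + 1)
    set q := n / (N1 + 1) with hq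
    set s := n % (N1 + 1) with hs
    have hslt : s < N1 + 1 := Nat.mod_lt _ (by omega)
    have hqlt : q < m + 1 := by
      have h := Nat.div_le_div_right (c := N1 + 1) hn
      have h2 : (N1 + m * (N1 + 1)) / (N1 + 1) = m := by
        rw [Nat.add_mul_div_right _ _ (by omega : 0 < N1 + 1),
          Nat.div_eq_of_lt (by omega)]
        omega
      omega
    have hmem : q * (N1 + 1) + N1 ∈ DNA := hbig q hqlt
    have hdm' : q * (N1 + 1) + s = n := by rw [mul_comm]; exact hdm
    generalize hg : q * (N1 + 1) = P at hmem hdm'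
    rcases Nat.eq_zero_or_pos s with h0 | hpos
    · exact ⟨P + N1, hmem, N1, by simpa using hbig 0 (by omega), by omega⟩
    · exact ⟨P + N1, hmem, N1 - s, hsmall _ (by omega), by omega⟩
  intro z hz
  rw [Finset.mem_Icc] at hz
  have hMn : M = ((N1 + m * (N1 + 1) : ℕ) : ℤ) := by push_cast [hM]; ring
  rw [Finset.mem_sub]
  rcases le_or_gt 0 z with hz0 | hz0
  · obtain ⟨a, ha, b, hb, hab⟩ := key z.toNat (by omega)
    exact ⟨a, Finset.mem_image.2 ⟨a, ha, rfl⟩, b, Finset.mem_image.2 ⟨b, hb, rfl⟩, by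
      push_cast [hab]; omega⟩
  · obtain ⟨a, ha, b, hb, hab⟩ := key (-z).toNat (by omega)
    exact ⟨b, Finset.mem_image.2 ⟨b, hb, rfl⟩, a, Finset.mem_image.2 ⟨a, ha, rfl⟩, by
      push_cast [hab]; omega⟩
end
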